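/- Let T be a rooted binary tree (every node has at most 2 children) and let Q be a set of nodes closed under taking lowest common ancestors. Then every connected component of T − Q has at most two neighbors in Q. -/

import Mathlib

/-- In a tree `T` rooted at `r`, `a` is an ancestor of `b` if `a` lies on every walk
from `r` to `b` (for a tree, equivalently, on the unique path from `r` to `b`).
Every node is an ancestor of itself. -/
def Anc {ι : Type} (T : SimpleGraph ι) (r a b : ι) : Prop :=
  ∀ p : T.Walk r b, a ∈ p.support

/-- `c` is the lowest common ancestor of `a` and `b` in the tree `T` rooted at `r`. -/
def IsLCA {ι : Type} (T : SimpleGraph ι) (r c a b : ι) : Prop :=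
  Anc T r c a ∧ Anc T r c b ∧ ∀ d, Anc T r d a → Anc T r d b → Anc T r d c

namespace TreeAux

open SimpleGraph

variable {ι : Type} [DecidableEq ι] {T : SimpleGraph ι}

/-- The canonical path between two vertices of a tree. -/
noncomputable def P (hT : T.IsTree) (a b : ι) : T.Walk a b :=
  ((hT.isConnected.preconnected a b).some.toPath : T.Path a b).val

lemma P_isPath (hT : T.IsTree) (a b : ι) : (P hT a b).IsPath :=
  ((hT.isConnected.preconnected a b).some.toPath : T.Path a b).prop

lemma path_eq (hT : T.IsTree) {a b : ι} (w : T.Walk a b) (hw : w.IsPath) :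
    w = P hT a b := by
  have := hT.IsAcyclic.path_unique ⟨w, hw⟩ ⟨P hT a b, P_isPath hT a b⟩
  exact congrArg Subtype.val this

/-- Any vertex on the canonical path lies on every walk between the endpoints. -/
lemma mem_walk_of_mem_P (hT : T.IsTree) {a b x : ι} (h : x ∈ (P hT a b).support)
    (w : T.Walk a b) : x ∈ w.support := by
  have he : (w.toPath : T.Walk a b) = P hT a b := path_eq hT _ w.toPath.prop
  exact w.support_toPath_subset (he ▸ h)

lemma anc_iff (hT : T.IsTree) {r a b : ι} : Anc T r a b ↔ a ∈ (P hT r b).support :=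
  ⟨fun h => h _, fun h p => mem_walk_of_mem_P hT h p⟩

lemma takeUntil_eq (hT : T.IsTree) {a b x : ι} (h : x ∈ (P hT a b).support) :
    (P hT a b).takeUntil x h = P hT a x :=
  path_eq hT _ ((P_isPath hT a b).takeUntil h)

lemma dropUntil_eq (hT : T.IsTree) {a b x : ι} (h : x ∈ (P hT a b).support) :
    (P hT a b).dropUntil x h = P hT x b :=
  path_eq hT _ ((P_isPath hT a b).dropUntil h)

lemma length_lt (hT : T.IsTree) {a b x : ι} (h : x ∈ (P hT a b).support) (hxb : x ≠ b) :
    (P hT a x).length < (P hT a b).length := by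
  have hs := (P hT a b).take_spec h
  have hlen : ((P hT a b).takeUntil x h).length + ((P hT a b).dropUntil x h).length
      = (P hT a b).length := by
    conv_rhs => rw [← hs]
    rw [SimpleGraph.Walk.length_append]
  rw [takeUntil_eq hT h] at hlen
  have hpos : ((P hT a b).dropUntil x h).length ≠ 0 := by
    intro h0
    exact hxb (SimpleGraph.Walk.eq_of_length_eq_zero h0)
  omega

lemma mem_P_trans (hT : T.IsTree) {a b x : ι} (h : x ∈ (P hT a b).support) :
    (P hT a x).support ⊆ (P hT a b).support := by
  rw [← takeUntil_eq hT h]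
  exact SimpleGraph.Walk.support_takeUntil_subset _ h

/-- If `y` appears in the part of the path from `a` to `b` after `x`, then `x` is
on the path from `a` to `y`. -/
lemma mem_P_of_mem_dropUntil (hT : T.IsTree) {a b x y : ι} (h : x ∈ (P hT a b).support)
    (hy : y ∈ ((P hT a b).dropUntil x h).support) : x ∈ (P hT a y).support := by
  set t := (P hT a b).takeUntil x h with ht
  set d := (P hT a b).dropUntil x h with hd
  have htp : t.IsPath := (P_isPath hT a b).takeUntil h
  have hdp : d.IsPath := (P_isPath hT a b).dropUntil h
  have happ : (t.append d).IsPath := by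
    rw [(P hT a b).take_spec h]; exact P_isPath hT a b
  have hnd : (t.support ++ d.support.tail).Nodup := by
    have := happ.support_nodup
    rwa [SimpleGraph.Walk.support_append] at this
  have hdisj : t.support.Disjoint d.support.tail := (List.nodup_append'.mp hnd).2.2
  set q : T.Walk a y := t.append (d.takeUntil y hy) with hq
  have hqp : q.IsPath := by
    rw [SimpleGraph.Walk.isPath_def, hq, SimpleGraph.Walk.support_append,
      List.nodup_append']
    refine ⟨htp.support_nodup, ?_, ?_⟩
    · have := ((hdp.takeUntil hy).support_nodup)
      rw [(d.takeUntil y hy).support_eq_cons] at this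
      exact (List.nodup_cons.mp this).2
    · intro z hz1 hz2
      have hzsup : z ∈ (d.takeUntil y hy).support := List.mem_of_mem_tail hz2
      have hzx : z ≠ x := by
        intro hzx
        have := (hdp.takeUntil hy).support_nodup
        rw [(d.takeUntil y hy).support_eq_cons] at this
        exact (List.nodup_cons.mp this).1 (hzx ▸ hz2)
      have hzd : z ∈ d.support := SimpleGraph.Walk.support_takeUntil_subset _ hy hzsup
      have hzdt : z ∈ d.support.tail := by
        have := d.support_eq_cons
        rw [this] at hzd
        rcases List.mem_cons.mp hzd with h' | h'
        · exact absurd h' hzx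
        · exact h'
      exact hdisj hz1 hzdt
  have hxe : x ∈ q.support := by
    rw [hq, SimpleGraph.Walk.mem_support_append_iff]
    exact Or.inl (SimpleGraph.Walk.end_mem_support t)
  rwa [path_eq hT q hqp] at hxe

/-- Two vertices on a common path from `a` are comparable. -/
lemma compare (hT : T.IsTree) {a b x y : ι} (hx : x ∈ (P hT a b).support)
    (hy : y ∈ (P hT a b).support) :
    y ∈ (P hT a x).support ∨ x ∈ (P hT a y).support := by
  rw [← (P hT a b).take_spec hx, SimpleGraph.Walk.mem_support_append_iff] at hy
  rcases hy with hy | hy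
  · left; rwa [takeUntil_eq hT hx] at hy
  · right; exact mem_P_of_mem_dropUntil hT hx hy

lemma anc_antisymm (hT : T.IsTree) {r x y : ι} (hx : x ∈ (P hT r y).support)
    (hy : y ∈ (P hT r x).support) : x = y := by
  by_contra hne
  have h1 := length_lt hT hx hne
  have h2 := length_lt hT hy (Ne.symm hne)
  omega

/-- Existence of the LCA, which moreover lies on the path between the two vertices. -/
lemma lca_exists {ι : Type} [DecidableEq ι] [Fintype ι] {T : SimpleGraph ι} (hT : T.IsTree) (r a b : ι) :
    ∃ c, IsLCA T r c a b ∧ c ∈ (P hT a b).support := by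
  classical
  set S : Finset ι :=
    Finset.univ.filter (fun d => d ∈ (P hT r a).support ∧ d ∈ (P hT r b).support) with hS
  have hrS : r ∈ S := by
    simp [hS, SimpleGraph.Walk.start_mem_support]
  obtain ⟨c, hcS, hmax⟩ := S.exists_max_image (fun d => (P hT r d).length) ⟨r, hrS⟩
  have hca : c ∈ (P hT r a).support := by
    simp only [hS, Finset.mem_filter] at hcS; exact hcS.2.1
  have hcb : c ∈ (P hT r b).support := by
    simp only [hS, Finset.mem_filter] at hcS; exact hcS.2.2
  have key : ∀ d, d ∈ (P hT r a).support → d ∈ (P hT r b).support →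
      d ∈ (P hT r c).support := by
    intro d hda hdb
    rcases compare hT hca hda with h | h
    · exact h
    · by_cases hcd : c = d
      · subst hcd; exact SimpleGraph.Walk.end_mem_support _
      · have h1 := length_lt hT h hcd
        have h2 : (P hT r d).length ≤ (P hT r c).length := by
          refine hmax d ?_
          simp [hS, hda, hdb]
        omega
  have hlca : IsLCA T r c a b := by
    refine ⟨(anc_iff hT).mpr hca, (anc_iff hT).mpr hcb, fun d hd1 hd2 => ?_⟩
    exact (anc_iff hT).mpr (key d ((anc_iff hT).mp hd1) ((anc_iff hT).mp hd2))
  refine ⟨c, hlca, ?_⟩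
  -- construct the path from `a` to `b` through `c`
  set d1 : T.Walk c a := (P hT r a).dropUntil c hca with hd1
  set d2 : T.Walk c b := (P hT r b).dropUntil c hcb with hd2
  have hd1p : d1.IsPath := (P_isPath hT r a).dropUntil hca
  have hd2p : d2.IsPath := (P_isPath hT r b).dropUntil hcb
  set π : T.Walk a b := d1.reverse.append d2 with hπ
  have hπp : π.IsPath := by
    rw [SimpleGraph.Walk.isPath_def, hπ, SimpleGraph.Walk.support_append,
      List.nodup_append', SimpleGraph.Walk.support_reverse]
    refine ⟨List.nodup_reverse.mpr hd1p.support_nodup, ?_, ?_⟩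
    · have := hd2p.support_nodup
      rw [d2.support_eq_cons] at this
      exact (List.nodup_cons.mp this).2
    · intro z hz1 hz2
      have hz1' : z ∈ d1.support := List.mem_reverse.mp hz1
      have hzc : z ≠ c := by
        intro hzc
        have := hd2p.support_nodup
        rw [d2.support_eq_cons] at this
        exact (List.nodup_cons.mp this).1 (hzc ▸ hz2)
      have hz2' : z ∈ d2.support := List.mem_of_mem_tail hz2
      have hza : z ∈ (P hT r a).support :=
        SimpleGraph.Walk.support_dropUntil_subset _ hca hz1'
      have hzb : z ∈ (P hT r b).support :=
        SimpleGraph.Walk.support_dropUntil_subset _ hcb hz2'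
      have h1 : z ∈ (P hT r c).support := key z hza hzb
      have h2 : c ∈ (P hT r z).support := mem_P_of_mem_dropUntil hT hca hz1'
      exact hzc (anc_antisymm hT h1 h2)
  have hcπ : c ∈ π.support := by
    rw [hπ, SimpleGraph.Walk.mem_support_append_iff]
    left
    rw [SimpleGraph.Walk.support_reverse, List.mem_reverse]
    exact SimpleGraph.Walk.start_mem_support d1
  rwa [path_eq hT π hπp] at hcπ

end TreeAux

open TreeAux SimpleGraph
/-- In a rooted binary tree, if Q is a set of nodes closed under taking lowest common
ancestors, then every connected component of T − Q has at most two neighbors in Q. -/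
theorem component_neighbors_le_two {ι : Type} [Fintype ι]
    (T : SimpleGraph ι) (hT : T.IsTree) (r : ι)
    (hbinary : ∀ v : ι, {w | T.Adj v w ∧ Anc T r v w}.ncard ≤ 2)
    (Q : Set ι)
    (hQ : ∀ a ∈ Q, ∀ b ∈ Q, ∀ c, IsLCA T r c a b → c ∈ Q) :
    ∀ C : (T.induce Qᶜ).ConnectedComponent,
      {q ∈ Q | ∃ v : ↥Qᶜ, (T.induce Qᶜ).connectedComponentMk v = C ∧ T.Adj ↑v q}.ncard ≤ 2 := by
  classical
  intro C
  set N := {q ∈ Q | ∃ v : ↥Qᶜ, (T.induce Qᶜ).connectedComponentMk v = C ∧ T.Adj ↑v q} with hN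
  by_contra hlt
  push_neg at hlt
  obtain ⟨a, ha, b, hb, c, hc, hab, hac, hbc⟩ := (Set.two_lt_ncard (Set.toFinite N)).mp hlt
  -- for any two neighbors of C, there is a walk between them avoiding Q internally
  have walkC : ∀ q1 ∈ N, ∀ q2 ∈ N,
      ∃ w : T.Walk q1 q2, ∀ x ∈ w.support, x ∈ Q → x = q1 ∨ x = q2 := by
    intro q1 hq1 q2 hq2
    obtain ⟨-, v1, hv1C, hadj1⟩ := hq1
    obtain ⟨-, v2, hv2C, hadj2⟩ := hq2
    have hreach : (T.induce Qᶜ).Reachable v1 v2 :=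
      SimpleGraph.ConnectedComponent.exact (hv1C.trans hv2C.symm)
    obtain ⟨p⟩ := hreach
    set w' : T.Walk (↑v1) (↑v2) := p.map (SimpleGraph.Embedding.induce Qᶜ).toHom with hw'
    refine ⟨SimpleGraph.Walk.cons hadj1.symm
      (w'.append (SimpleGraph.Walk.cons hadj2 SimpleGraph.Walk.nil)), ?_⟩
    intro x hx hxQ
    simp only [SimpleGraph.Walk.support_cons, List.mem_cons,
      SimpleGraph.Walk.mem_support_append_iff] at hx
    rcases hx with rfl | hx | hx
    · exact Or.inl rfl
    · exfalso
      have hx3 := List.mem_map.mp (Eq.mp (congrArg (x ∈ ·)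
        (SimpleGraph.Walk.support_map (SimpleGraph.Embedding.induce Qᶜ).toHom p)) hx)
      obtain ⟨u, -, rfl⟩ := hx3
      exact u.prop hxQ
    · simp only [SimpleGraph.Walk.support_cons, SimpleGraph.Walk.support_nil,
        List.mem_cons, List.mem_singleton] at hx
      rcases hx with rfl | rfl | h'
      · exact absurd hxQ v2.prop
      · exact Or.inr rfl
      · exact absurd h' (by simp)
  -- any two neighbors are comparable in the ancestry order
  have comp2 : ∀ q1 ∈ N, ∀ q2 ∈ N,
      q1 ∈ (P hT r q2).support ∨ q2 ∈ (P hT r q1).support := by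
    intro q1 hq1 q2 hq2
    obtain ⟨w, hw⟩ := walkC q1 hq1 q2 hq2
    obtain ⟨d, hlca, hdmem⟩ := lca_exists hT r q1 q2
    have hdQ : d ∈ Q := hQ q1 hq1.1 q2 hq2.1 d hlca
    have hdw : d ∈ w.support := mem_walk_of_mem_P hT hdmem w
    rcases hw d hdw hdQ with rfl | rfl
    · exact Or.inl ((anc_iff hT).mp hlca.2.1)
    · exact Or.inr ((anc_iff hT).mp hlca.1)
  -- a strict three-chain among neighbors is impossible
  have chainFalse : ∀ x ∈ N, ∀ y ∈ N, ∀ z ∈ N, x ≠ y → y ≠ z → x ≠ z →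
      x ∈ (P hT r y).support → y ∈ (P hT r z).support → False := by
    intro x hx y hy z hz hxy hyz hxz hxay hyaz
    have hxaz : x ∈ (P hT r z).support := mem_P_trans hT hyaz hxay
    have hyd : y ∈ ((P hT r z).dropUntil x hxaz).support := by
      have := hyaz
      rw [← (P hT r z).take_spec hxaz, SimpleGraph.Walk.mem_support_append_iff] at this
      rcases this with h' | h'
      · exfalso
        rw [takeUntil_eq hT hxaz] at h'
        exact hxy (anc_antisymm hT hxay h')
      · exact h'
    rw [dropUntil_eq hT hxaz] at hyd
    obtain ⟨w, hw⟩ := walkC x hx z hz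
    have : y ∈ w.support := mem_walk_of_mem_P hT hyd w
    rcases hw y this hy.1 with rfl | rfl
    · exact hxy rfl
    · exact hyz rfl
  rcases comp2 a ha b hb with h1 | h1 <;> rcases comp2 b hb c hc with h2 | h2 <;>
    rcases comp2 a ha c hc with h3 | h3
  · exact chainFalse a ha b hb c hc hab hbc hac h1 h2
  · exact chainFalse a ha b hb c hc hab hbc hac h1 h2
  · exact chainFalse a ha c hc b hb hac hbc.symm hab h3 h2
  · exact chainFalse c hc a ha b hb hac.symm hab hbc.symm h3 h1
  · exact chainFalse b hb a ha c hc hab.symm hac hbc h1 h3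
  · exact chainFalse b hb c hc a ha hbc hac.symm hab.symm h2 h3
  · exact chainFalse c hc b hb a ha hbc.symm hab.symm hac.symm h2 h1
  · exact chainFalse c hc b hb a ha hbc.symm hab.symm hac.symm h2 h1
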